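/- Let n ∈ ℕ with n ≥ 1, let f : (Fin n → Bool) → Bool, and let k be an integer with 1 ≤ k ≤ n. Then MC(Fin n) = min over finite sets K ⊆ Fin n with |K| = k of ( MC(K) + RC(K, Kᶜ) ), where Kᶜ is the complement of K in Fin n. -/

import Mathlib

/-!
Cutting an ordering of `I` after its first `k` variables splits it into an ordering of a
`k`-set `K` followed by an ordering of `I \ K`, and the cost of reading a sequence is additive
under concatenation, the second part being read with the first one already in the prefix.
So every ordering of `I` costs at least `RC(B, K) + RC(B ∪ K, I \ K)` for its own `K`, and
conversely optimal orderings of `K` and of `I \ K` concatenate to an ordering of `I` of that cost.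
-/

open Finset

def restrict (n : ℕ) (f : (Fin n → Bool) → Bool) (S : Finset (Fin n)) (b : Fin n → Bool) :
    (Fin n → Bool) → Bool :=
  fun x => f fun i => if i ∈ S then b i else x i

def DependsEssentiallyOn (n : ℕ) (g : (Fin n → Bool) → Bool) (i : Fin n) : Prop :=
  ∃ x : Fin n → Bool, g x ≠ g (Function.update x i (!x i))

noncomputable def width (n : ℕ) (f : (Fin n → Bool) → Bool) (I : Finset (Fin n)) (i : Fin n) : ℕ :=
  Set.ncard {g : (Fin n → Bool) → Bool | DependsEssentiallyOn n g i ∧ ∃ b, g = restrict n f Iᶜ b}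

noncomputable def RC (n : ℕ) (f : (Fin n → Bool) → Bool) (B J : Finset (Fin n)) : ℕ :=
  sInf { c | ∃ σ : Fin J.card ≃ {j // j ∈ J},
    c = ∑ j : Fin J.card,
          width n f (B ∪ (Finset.Iic j).image (fun t => ((σ t : {j // j ∈ J}) : Fin n))) (σ j) }

noncomputable def MC (n : ℕ) (f : (Fin n → Bool) → Bool) (I : Finset (Fin n)) : ℕ :=
  RC n f ∅ I

section SeqCost

variable {α M : Type*} [DecidableEq α] [AddCommMonoid M]

def seqCost (w : Finset α → α → M) (B : Finset α) {m : ℕ} (g : Fin m → α) : M :=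
  ∑ j, w (B ∪ (Iic j).image g) (g j)

lemma Fin.Iic_natAdd {a b : ℕ} (j : Fin b) :
    Iic (Fin.natAdd a j) = univ.image (Fin.castAdd b) ∪ (Iic j).image (Fin.natAdd a) := by
  ext x
  induction x using Fin.addCases with
  | left i =>
    refine iff_of_true (mem_Iic.2 (Fin.le_def.2 ?_)) (by simp)
    simp only [Fin.val_castAdd, Fin.val_natAdd]
    omega
  | right i =>
    simp only [mem_Iic, mem_union, mem_image, mem_univ, true_and, Fin.natAdd_le_natAdd_iff,
      Fin.natAdd_inj, exists_eq_right]
    refine ⟨Or.inr, Or.rec (fun ⟨k, hk⟩ => absurd (congrArg Fin.val hk) ?_) id⟩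
    simp only [Fin.val_castAdd, Fin.val_natAdd]
    omega

lemma seqCost_append (w : Finset α → α → M) (B : Finset α) {a b : ℕ} (g₁ : Fin a → α)
    (g₂ : Fin b → α) :
    seqCost w B (Fin.append g₁ g₂) =
      seqCost w B g₁ + seqCost w (B ∪ univ.image g₁) g₂ := by
  have hcast : Fin.append g₁ g₂ ∘ Fin.castAdd b = g₁ := funext (Fin.append_left g₁ g₂)
  have hnat : Fin.append g₁ g₂ ∘ Fin.natAdd a = g₂ := funext (Fin.append_right g₁ g₂)
  simp only [seqCost, Fin.sum_univ_add, Fin.append_left, Fin.append_right,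
    ← Fin.finsetImage_castAdd_Iic, Fin.Iic_natAdd, image_union, image_image, hcast, hnat,
    union_assoc]

lemma seqCost_comp_cast (w : Finset α → α → M) (B : Finset α) {m m' : ℕ} (h : m = m')
    (g : Fin m' → α) : seqCost w B (g ∘ Fin.cast h) = seqCost w B g := by
  subst h; rfl

lemma Fin.image_univ_append {a b : ℕ} (g₁ : Fin a → α) (g₂ : Fin b → α) :
    univ.image (Fin.append g₁ g₂) = univ.image g₁ ∪ univ.image g₂ := by
  ext x
  simp only [mem_image, mem_univ, true_and, mem_union]
  constructor
  · rintro ⟨i, rfl⟩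
    induction i using Fin.addCases <;> simp
  · rintro (⟨i, rfl⟩ | ⟨i, rfl⟩)
    exacts [⟨_, Fin.append_left g₁ g₂ i⟩, ⟨_, Fin.append_right g₁ g₂ i⟩]

end SeqCost

section RelativeCost

variable {n : ℕ} (f : (Fin n → Bool) → Bool) (B : Finset (Fin n))

lemma RC_le_seqCost {J : Finset (Fin n)} {m : ℕ} {g : Fin m → Fin n}
    (hg : Function.Injective g) (hJ : univ.image g = J) :
    RC n f B J ≤ seqCost (width n f) B g := by
  have hm : m = J.card := by rw [← hJ, card_image_of_injective _ hg, card_fin]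
  let σ : Fin J.card ≃ {j // j ∈ J} := (finCongr hm.symm).trans <|
    (Equiv.ofInjective g hg).trans <| Equiv.subtypeEquivRight fun x => by simp [← hJ]
  rw [← seqCost_comp_cast (width n f) B hm.symm g]
  exact Nat.sInf_le ⟨σ, rfl⟩

lemma exists_seqCost_eq_RC (J : Finset (Fin n)) :
    ∃ g : Fin J.card → Fin n, Function.Injective g ∧ univ.image g = J ∧
      seqCost (width n f) B g = RC n f B J := by
  have hne : {c | ∃ σ : Fin J.card ≃ {j // j ∈ J},
      c = seqCost (width n f) B fun t => (σ t : Fin n)}.Nonempty := ⟨_, J.equivFin.symm, rfl⟩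
  obtain ⟨σ, hσ⟩ := Nat.sInf_mem hne
  refine ⟨fun t => σ t, Subtype.val_injective.comp σ.injective, ?_, hσ.symm⟩
  ext x
  simp only [mem_image, mem_univ, true_and]
  exact ⟨fun ⟨t, ht⟩ => ht ▸ (σ t).2, fun hx => ⟨σ.symm ⟨x, hx⟩, by simp⟩⟩

lemma RC_union_le {K J : Finset (Fin n)} (hKJ : Disjoint K J) :
    RC n f B (K ∪ J) ≤ RC n f B K + RC n f (B ∪ K) J := by
  obtain ⟨g₁, hg₁, hK, h₁⟩ := exists_seqCost_eq_RC f B K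
  obtain ⟨g₂, hg₂, hJ, h₂⟩ := exists_seqCost_eq_RC f (B ∪ K) J
  have hne : ∀ i j, g₁ i ≠ g₂ j := fun i j => disjoint_iff_ne.1 hKJ _
    (hK ▸ mem_image_of_mem _ (mem_univ i)) _ (hJ ▸ mem_image_of_mem _ (mem_univ j))
  calc RC n f B (K ∪ J)
      ≤ seqCost (width n f) B (Fin.append g₁ g₂) :=
        RC_le_seqCost f B (Fin.append_injective_iff.2 ⟨hg₁, hg₂, hne⟩)
          (by rw [Fin.image_univ_append, hK, hJ])
    _ = RC n f B K + RC n f (B ∪ K) J := by rw [seqCost_append, hK, h₁, h₂]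

lemma exists_RC_add_RC_sdiff_le {I : Finset (Fin n)} {k : ℕ} (hk : k ≤ I.card) :
    ∃ K ∈ I.powersetCard k, RC n f B K + RC n f (B ∪ K) (I \ K) ≤ RC n f B I := by
  obtain ⟨g, hg, hI, hcost⟩ := exists_seqCost_eq_RC f B I
  have hm : k + (I.card - k) = I.card := Nat.add_sub_of_le hk
  set g' := g ∘ Fin.cast hm
  have hg' : Function.Injective g' := hg.comp (Fin.cast_injective _)
  set g₁ := fun i => g' (Fin.castAdd (I.card - k) i)
  set g₂ := fun i => g' (Fin.natAdd k i)
  have happ : Fin.append g₁ g₂ = g' := Fin.append_castAdd_natAdd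
  obtain ⟨hg₁, hg₂, hne⟩ := Fin.append_injective_iff.1 (happ ▸ hg')
  have hI' : univ.image g₁ ∪ univ.image g₂ = I := by
    rw [← Fin.image_univ_append, happ, ← image_image,
      image_univ_of_surjective (f := Fin.cast hm) (finCongr hm).surjective, hI]
  have hdisj : Disjoint (univ.image g₁) (univ.image g₂) := by
    simp only [disjoint_left, mem_image, mem_univ, true_and]
    rintro _ ⟨i, rfl⟩ ⟨j, hj⟩
    exact hne i j hj.symm
  refine ⟨univ.image g₁, mem_powersetCard.2 ⟨hI' ▸ subset_union_left, ?_⟩, ?_⟩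
  · rw [card_image_of_injective _ hg₁, card_fin]
  calc RC n f B (univ.image g₁) + RC n f (B ∪ univ.image g₁) (I \ univ.image g₁)
      ≤ seqCost (width n f) B g₁ + seqCost (width n f) (B ∪ univ.image g₁) g₂ :=
        add_le_add (RC_le_seqCost f B hg₁ rfl)
          (RC_le_seqCost f _ hg₂ (by rw [← union_sdiff_cancel_left hdisj, hI']))
    _ = RC n f B I := by
        rw [← seqCost_append, happ, seqCost_comp_cast, hcost]

theorem RC_eq_inf'_powersetCard {I : Finset (Fin n)} {k : ℕ} (hk : k ≤ I.card) :
    RC n f B I = (I.powersetCard k).inf' (powersetCard_nonempty.2 hk)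
      (fun K => RC n f B K + RC n f (B ∪ K) (I \ K)) := by
  refine le_antisymm (le_inf' _ _ fun K hK => ?_) ?_
  · have hKI := (mem_powersetCard.1 hK).1
    simpa only [union_sdiff_of_subset hKI]
      using RC_union_le f B (K := K) (J := I \ K) disjoint_sdiff
  · obtain ⟨K, hK, hle⟩ := exists_RC_add_RC_sdiff_le f B hk
    exact (inf'_le _ hK).trans hle

end RelativeCost

/-- Divide and conquer for the full variable set: for `1 ≤ k ≤ n`,
`MC([n]) = min_{K ⊆ [n], |K| = k} (MC(K) + RC(K, Kᶜ))`. -/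
theorem stmt_4 (n : ℕ) (f : (Fin n → Bool) → Bool) (k : ℕ)
    (hk2 : k ≤ n) :
    MC n f Finset.univ
      = ((Finset.univ : Finset (Fin n)).powersetCard k).inf'
          (Finset.powersetCard_nonempty.mpr (by simpa using hk2))
          (fun K => MC n f K + RC n f K Kᶜ) := by
  simpa only [MC, empty_union, ← compl_eq_univ_sdiff]
    using RC_eq_inf'_powersetCard f ∅ (I := univ) (k := k) (by simpa using hk2)
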